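/- For the entropy-regularized Gelbrich divergence, as ε → 0 it converges to the squared Gelbrich (Bures–Wasserstein) distance: G_ε(Σ₁,Σ₂) → Tr(Σ₁) + Tr(Σ₂) − 2Tr((Σ₁^{1/2}Σ₂Σ₁^{1/2})^{1/2}). -/

import Mathlib

/-!
Write `M = Σ₁^{1/2} Σ₂ Σ₁^{1/2} ≥ 0`. By uniqueness of positive square roots,
`D ε = √(M + ε²/16)` is the functional calculus of `M` applied to `x ↦ √(x + ε²/16)`,
so in an eigenbasis of `M` (eigenvalues `μᵢ ≥ 0`) `Tr (D ε)` is continuous in `ε` and the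
log-determinant term equals `∑ᵢ (ε/2) log h_i(ε)` with `h_i(ε) = (2/ε)(√(μᵢ + ε²/16) + ε/4)`.
Since `1 ≤ h_i` and `log h ≤ 2√h`, each summand lies between `0` and `√(ε² h_i(ε)) = O(√ε)`.
The terms involving `Σ` are linear in `ε`.
-/

/-- The PSD square root of a PSD matrix, as `Matrix.PosSemidef.sqrt` was defined in older Mathlib. -/
noncomputable def Matrix.PosSemidef.sqrt {n : Type*} [Fintype n] [DecidableEq n]
    {A : Matrix n n ℝ} (hA : A.PosSemidef) : Matrix n n ℝ :=
  (hA.1.eigenvectorUnitary : Matrix n n ℝ) * Matrix.diagonal ((↑) ∘ Real.sqrt ∘ hA.1.eigenvalues)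
    * (star hA.1.eigenvectorUnitary : Matrix n n ℝ)

open Matrix Filter Topology Finset Real
open scoped MatrixOrder

lemma tendsto_mul_log_of_one_le {h : ℝ → ℝ} (h_one_le : ∀ᶠ x in 𝓝[>] 0, 1 ≤ h x)
    (h_sq_mul : Tendsto (fun x => x ^ 2 * h x) (𝓝[>] 0) (𝓝 0)) :
    Tendsto (fun x => x * log (h x)) (𝓝[>] 0) (𝓝 0) := by
  have h_bound : Tendsto (fun x => 2 * √(x ^ 2 * h x)) (𝓝[>] 0) (𝓝 0) := by
    simpa using h_sq_mul.sqrt.const_mul 2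
  refine squeeze_zero' ?_ ?_ h_bound
  · filter_upwards [self_mem_nhdsWithin, h_one_le] with x hx h1
    exact mul_nonneg hx.out.le (log_nonneg h1)
  · filter_upwards [self_mem_nhdsWithin, h_one_le] with x hx h1
    calc x * log (h x) ≤ x * (h x ^ (1 / 2 : ℝ) / (1 / 2)) :=
          mul_le_mul_of_nonneg_left (log_le_rpow_div (by linarith) (by norm_num)) hx.out.le
      _ = 2 * √(x ^ 2 * h x) := by
          rw [sqrt_mul (sq_nonneg x), sqrt_sq hx.out.le, sqrt_eq_rpow]; ring

lemma tendsto_mul_log_two_div_mul_sqrt_add {m : ℝ} (hm : 0 ≤ m) :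
    Tendsto (fun ε => ε * log (2 / ε * (√(m + ε ^ 2 / 16) + ε / 4))) (𝓝[>] 0) (𝓝 0) := by
  refine tendsto_mul_log_of_one_le ?_ ?_
  · filter_upwards [self_mem_nhdsWithin] with ε (hε : 0 < ε)
    have h_quarter_le : ε / 4 ≤ √(m + ε ^ 2 / 16) := le_sqrt_of_sq_le (by nlinarith)
    calc 1 = 2 / ε * (ε / 4 + ε / 4) := by field_simp; ring
      _ ≤ _ := by gcongr
  · have h_cont : Continuous fun ε : ℝ => 2 * ε * (√(m + ε ^ 2 / 16) + ε / 4) := by fun_prop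
    refine ((h_cont.tendsto' 0 0 (by simp)).mono_left nhdsWithin_le_nhds).congr' ?_
    filter_upwards [self_mem_nhdsWithin] with ε (hε : 0 < ε)
    field_simp

section CFC

variable {A : Type*} [PartialOrder A] [Ring A] [StarRing A] [TopologicalSpace A]
  [StarOrderedRing A] [Algebra ℝ A] [ContinuousFunctionalCalculus ℝ A IsSelfAdjoint]
  [NonnegSpectrumClass ℝ A] [IsSemitopologicalRing A] [T2Space A]

lemma CFC.eq_cfc_sqrt_add_of_mul_self_eq {a b : A} {c : ℝ} (ha : 0 ≤ a) (hc : 0 ≤ c)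
    (hb : 0 ≤ b) (h : b * b = a + algebraMap ℝ A c) : b = cfc (fun x => √(x + c)) a := by
  have hsq : cfc (fun x => √(x + c)) a * cfc (fun x => √(x + c)) a = a + algebraMap ℝ A c := by
    rw [← cfc_mul .., cfc_congr (g := fun x => x + c) fun x hx =>
      Real.mul_self_sqrt (by linarith [spectrum_nonneg_of_nonneg ha hx]),
      cfc_add_const c (fun x => x) a, cfc_id' ℝ a]
  exact (CFC.mul_self_eq_mul_self_iff b _ hb (cfc_nonneg fun _ _ => Real.sqrt_nonneg _)).1
    (h.trans hsq.symm)

end CFC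

namespace Matrix

variable {n 𝕜 : Type*} [Fintype n] [DecidableEq n] [RCLike 𝕜] {A : Matrix n n 𝕜}

lemma IsHermitian.trace_cfc (hA : A.IsHermitian) (f : ℝ → ℝ) :
    (cfc f A).trace = ∑ i, (f (hA.eigenvalues i) : 𝕜) := by
  rw [hA.cfc_eq, IsHermitian.cfc, Unitary.conjStarAlgAut_apply, trace_mul_cycle,
    Unitary.coe_star_mul_self, one_mul, trace_diagonal]
  rfl

lemma IsHermitian.det_cfc (hA : A.IsHermitian) (f : ℝ → ℝ) :
    (cfc f A).det = ∏ i, (f (hA.eigenvalues i) : 𝕜) := by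
  rw [hA.cfc_eq, IsHermitian.cfc, Unitary.conjStarAlgAut_apply, det_mul_comm, ← mul_assoc,
    Unitary.coe_star_mul_self, one_mul, det_diagonal]
  rfl

lemma IsHermitian.continuous_trace_cfc (hA : A.IsHermitian) {f : ℝ → ℝ → ℝ}
    (hf : ∀ x, Continuous fun t => f t x) : Continuous fun t => (cfc (f t) A).trace := by
  simp_rw [hA.trace_cfc]
  fun_prop

lemma PosSemidef.sqrt_eq_cfc {A : Matrix n n ℝ} (hA : A.PosSemidef) :
    hA.sqrt = cfc Real.sqrt A := by
  rw [hA.1.cfc_eq, IsHermitian.cfc, Unitary.conjStarAlgAut_apply]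
  rfl

lemma PosSemidef.tendsto_mul_log_det_cfc {M : Matrix n n ℝ} (hM : M.PosSemidef) :
    Tendsto (fun ε => ε * log ((2 / ε) ^ Fintype.card n *
      (cfc (fun x => √(x + ε ^ 2 / 16) + ε / 4) M).det)) (𝓝[>] 0) (𝓝 0) := by
  have h_sum := tendsto_finsetSum univ fun i _ =>
    tendsto_mul_log_two_div_mul_sqrt_add (hM.eigenvalues_nonneg i)
  rw [sum_const_zero] at h_sum
  refine h_sum.congr' ?_
  filter_upwards [self_mem_nhdsWithin] with ε (hε : 0 < ε)
  rw [hM.1.det_cfc, ← card_univ, ← prod_const, ← prod_mul_distrib, log_prod, mul_sum]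
  · rfl
  · intro i _
    positivity

end Matrix

theorem tendsto_Gelbrich_eps_general {d : ℕ}
    {S S₁ S₂ : Matrix (Fin d) (Fin d) ℝ}
    (h₁ : S₁.PosDef) (h₂ : S₂.PosDef)
    (D : ℝ → Matrix (Fin d) (Fin d) ℝ)
    (hD : ∀ ε, (D ε).PosSemidef)
    (hDsq : ∀ ε, D ε * D ε =
      Matrix.PosSemidef.sqrt h₁.posSemidef * S₂ * Matrix.PosSemidef.sqrt h₁.posSemidef
        + (ε ^ 2 / 16) • (1 : Matrix (Fin d) (Fin d) ℝ)) :
    Filter.Tendsto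
      (fun ε : ℝ =>
        S₁.trace + S₂.trace - 2 * (D ε).trace
          + (ε / 2) * (S⁻¹ * S₂).trace
          + (ε / 2) * Real.log (S.det / S₂.det)
          + (ε / 2) * Real.log ((2 / ε) ^ d
              * (D ε + (ε / 4) • (1 : Matrix (Fin d) (Fin d) ℝ)).det))
      (nhdsWithin 0 (Set.Ioi 0))
      (nhds (S₁.trace + S₂.trace - 2 * (D 0).trace)) := by
  have hM : (h₁.posSemidef.sqrt * S₂ * h₁.posSemidef.sqrt).PosSemidef := by
    rw [← nonneg_iff_posSemidef, h₁.posSemidef.sqrt_eq_cfc]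
    exact (cfc_predicate Real.sqrt S₁).conjugate_nonneg h₂.posSemidef.nonneg
  set M := h₁.posSemidef.sqrt * S₂ * h₁.posSemidef.sqrt
  have hD_eq (ε : ℝ) : D ε = cfc (fun x => √(x + ε ^ 2 / 16)) M :=
    CFC.eq_cfc_sqrt_add_of_mul_self_eq hM.nonneg (by positivity) (hD ε).nonneg
      (by rw [hDsq, Algebra.algebraMap_eq_smul_one])
  have h_trace : Tendsto (fun ε => (D ε).trace) (𝓝[>] 0) (𝓝 (D 0).trace) := by
    simp_rw [hD_eq]
    exact ((hM.1.continuous_trace_cfc fun x => by fun_prop).tendsto 0).mono_left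
      nhdsWithin_le_nhds
  have h_log_det : Tendsto (fun ε => ε * log ((2 / ε) ^ d * (D ε + (ε / 4) • 1).det))
      (𝓝[>] 0) (𝓝 0) := by
    have hD_add (ε : ℝ) : D ε + (ε / 4) • 1 = cfc (fun x => √(x + ε ^ 2 / 16) + ε / 4) M := by
      rw [hD_eq, cfc_add_const (ε / 4) (fun x => √(x + ε ^ 2 / 16)) M,
        Algebra.algebraMap_eq_smul_one]
    simpa only [hD_add, Fintype.card_fin] using hM.tendsto_mul_log_det_cfc
  have h_id : Tendsto (fun ε : ℝ => ε) (𝓝[>] 0) (𝓝 0) := nhdsWithin_le_nhds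
  simpa [mul_comm_div, mul_div_assoc] using
    ((((h_trace.const_mul 2).const_sub (S₁.trace + S₂.trace)).add
      ((h_id.div_const 2).mul_const (S⁻¹ * S₂).trace)).add
      ((h_id.div_const 2).mul_const (log (S.det / S₂.det)))).add (h_log_det.div_const 2)

/-- As `ε → 0⁺`, the entropy-regularized Gelbrich divergence converges to the
squared Gelbrich (Bures–Wasserstein) distance. Here `D ε` denotes the PSD
square root of `Σ₁^{1/2} Σ₂ Σ₁^{1/2} + (ε²/16) I` (characterized by being PSD
with the right square), so that `D 0 = (Σ₁^{1/2} Σ₂ Σ₁^{1/2})^{1/2}`. -/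
theorem tendsto_Gelbrich_eps {d : ℕ}
    {S S₁ S₂ : Matrix (Fin d) (Fin d) ℝ}
    (hS : S.PosDef) (h₁ : S₁.PosDef) (h₂ : S₂.PosDef)
    (D : ℝ → Matrix (Fin d) (Fin d) ℝ)
    (hD : ∀ ε, (D ε).PosSemidef)
    (hDsq : ∀ ε, D ε * D ε =
      Matrix.PosSemidef.sqrt h₁.posSemidef * S₂ * Matrix.PosSemidef.sqrt h₁.posSemidef
        + (ε ^ 2 / 16) • (1 : Matrix (Fin d) (Fin d) ℝ)) :
    Filter.Tendsto
      (fun ε : ℝ =>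
        S₁.trace + S₂.trace - 2 * (D ε).trace
          + (ε / 2) * (S⁻¹ * S₂).trace
          + (ε / 2) * Real.log (S.det / S₂.det)
          + (ε / 2) * Real.log ((2 / ε) ^ d
              * (D ε + (ε / 4) • (1 : Matrix (Fin d) (Fin d) ℝ)).det))
      (nhdsWithin 0 (Set.Ioi 0))
      (nhds (S₁.trace + S₂.trace - 2 * (D 0).trace)) :=
  tendsto_Gelbrich_eps_general h₁ h₂ D hD hDsq
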